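/- arXiv:2402.18256 — 9 statements merged into one kernel-verified Lean document; each statement's English description precedes it below -/
import Mathlib

section
/- Let f > 0, γ ≥ 0, B_D > 0, A > 0, r ≥ 0, S > 0 satisfy f·γ < A + r ≤ f·(B_D/S + γ). Define x* = √(f·B_D·S/(A + r − f·γ)) − S. Then x* ≥ 0, and for every x ≥ 0, g(x) ≤ g(x*), where g(x) = f·x·(B_D + γ·(x + S))/(x + S) − (A + r)·x. That is, x* is the investor's best response to the other investors' total liquidity S in the intermediate case. -/
/-- In the intermediate case `f·γ < A + r ≤ f·(B_D/S + γ)`, the best response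
`x* = √(f·B_D·S/(A + r − f·γ)) − S` is nonnegative and maximizes the objective `g` over `x ≥ 0`. -/
theorem best_response_intermediate
    (f γ B_D A r S : ℝ) (hf : 0 < f) (hγ : 0 ≤ γ) (hB : 0 < B_D) (hA : 0 < A)
    (hr : 0 ≤ r) (hS : 0 < S)
    (hlow : f * γ < A + r) (hhigh : A + r ≤ f * (B_D / S + γ)) :
    0 ≤ Real.sqrt (f * B_D * S / (A + r - f * γ)) - S ∧
    ∀ x : ℝ, 0 ≤ x →
      f * x * (B_D + γ * (x + S)) / (x + S) - (A + r) * x ≤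
      f * (Real.sqrt (f * B_D * S / (A + r - f * γ)) - S) *
          (B_D + γ * ((Real.sqrt (f * B_D * S / (A + r - f * γ)) - S) + S)) /
          ((Real.sqrt (f * B_D * S / (A + r - f * γ)) - S) + S) -
        (A + r) * (Real.sqrt (f * B_D * S / (A + r - f * γ)) - S) := by
  set c : ℝ := A + r - f * γ with hc_def
  have hc : 0 < c := by simp only [hc_def]; linarith
  set u : ℝ := Real.sqrt (f * B_D * S / c) with hu_def
  have harg : 0 < f * B_D * S / c := by positivity
  have hupos : 0 < u := Real.sqrt_pos.mpr harg
  have hu2 : u ^ 2 = f * B_D * S / c := Real.sq_sqrt harg.le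
  have key : c * u ^ 2 = f * B_D * S := by rw [hu2]; field_simp
  have hcS : c * S ≤ f * B_D := by
    have h1 : c ≤ f * B_D / S := by
      have : f * (B_D / S + γ) = f * B_D / S + f * γ := by ring
      rw [this] at hhigh
      simp only [hc_def]; linarith
    calc c * S ≤ (f * B_D / S) * S := by nlinarith
      _ = f * B_D := by field_simp
  have hSu : S ≤ u := by
    rw [hu_def, show (S:ℝ) ≤ Real.sqrt (f * B_D * S / c) ↔ S ^ 2 ≤ f * B_D * S / c from
      Real.le_sqrt' hS, le_div_iff₀ hc]
    nlinarith
  constructor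
  · linarith
  · intro x hx
    have hxS : 0 < x + S := by linarith
    have hsimp : u - S + S = u := by ring
    rw [hsimp]
    have e1 : f * x * (B_D + γ * (x + S)) / (x + S) - (A + r) * x
        = (f * x * (B_D + γ * (x + S)) - (A + r) * x * (x + S)) / (x + S) := by
      field_simp
    have e2 : f * (u - S) * (B_D + γ * u) / u - (A + r) * (u - S)
        = (f * (u - S) * (B_D + γ * u) - (A + r) * (u - S) * u) / u := by
      field_simp
    rw [e1, e2, div_le_div_iff₀ hxS hupos]
    have hid : (f * (u - S) * (B_D + γ * u) - (A + r) * (u - S) * u) * (x + S)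
        - (f * x * (B_D + γ * (x + S)) - (A + r) * x * (x + S)) * u
        = c * u * (u - x - S) ^ 2 := by
      simp only [hc_def]
      linear_combination (x + S - u) * key
    nlinarith [mul_nonneg (mul_nonneg hc.le hupos.le) (sq_nonneg (u - x - S)), hid]
end

section
/- Let f > 0, γ ≥ 0, B_D > 0, A > 0, r ≥ 0, S > 0 satisfy f·(B_D/S + γ) < A + r. Then for every x > 0, g(x) < g(0) = 0, where g(x) = f·x·(B_D + γ·(x + S))/(x + S) − (A + r)·x. That is, the investor's unique best response to the other investors' total liquidity S is to provide zero liquidity. -/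
/-- If `f·(B_D/S + γ) < A + r`, then `g(0) = 0` and for every `x > 0`,
`g(x) < g(0)`; the unique best response is to provide zero liquidity. -/
theorem best_response_zero
    (f γ B_D A r S : ℝ) (hf : 0 < f) (hγ : 0 ≤ γ) (hB : 0 < B_D) (hA : 0 < A)
    (hr : 0 ≤ r) (hS : 0 < S)
    (hhigh : f * (B_D / S + γ) < A + r) :
    (f * (0 : ℝ) * (B_D + γ * ((0 : ℝ) + S)) / ((0 : ℝ) + S) - (A + r) * 0 = 0) ∧
    ∀ x : ℝ, 0 < x →
      f * x * (B_D + γ * (x + S)) / (x + S) - (A + r) * x <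
      f * (0 : ℝ) * (B_D + γ * ((0 : ℝ) + S)) / ((0 : ℝ) + S) - (A + r) * 0 := by
  constructor
  · simp
  · intro x hx
    have hu : 0 < x + S := by linarith
    have h1 : B_D / (x + S) < B_D / S :=
      div_lt_div_of_pos_left hB hS (by linarith)
    have h2 : f * (B_D / (x + S) + γ) < A + r := by nlinarith
    have heq : f * x * (B_D + γ * (x + S)) / (x + S)
        = x * (f * (B_D / (x + S) + γ)) := by
      field_simp
    rw [heq]
    simp only [mul_zero, zero_mul, zero_div, sub_zero]
    nlinarith
end

section
/- Let f > 0, γ > 0, B_D > 0, A > 0, r ≥ 0, S > 0 satisfy A + r ≤ f·γ. Then the function g(x) = f·x·(B_D + γ·(x + S))/(x + S) − (A + r)·x is strictly monotone increasing on [0, ∞); consequently, for any endowment E > 0, its maximum over [0, E] is attained at x = E, i.e., the investor provides their entire endowment as liquidity. -/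
/-- If `A + r ≤ f·γ`, the objective `g` is strictly monotone increasing on `[0, ∞)`,
so for any endowment `E > 0` its maximum over `[0, E]` is attained at `x = E`. -/
theorem best_response_full_endowment
    (f γ B_D A r S : ℝ) (hf : 0 < f) (hγ : 0 < γ) (hB : 0 < B_D) (hA : 0 < A)
    (hr : 0 ≤ r) (hS : 0 < S)
    (hcase : A + r ≤ f * γ) :
    StrictMonoOn (fun x : ℝ => f * x * (B_D + γ * (x + S)) / (x + S) - (A + r) * x)
      (Set.Ici (0 : ℝ)) ∧
    ∀ E : ℝ, 0 < E → ∀ x ∈ Set.Icc (0 : ℝ) E,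
      f * x * (B_D + γ * (x + S)) / (x + S) - (A + r) * x ≤
      f * E * (B_D + γ * (E + S)) / (E + S) - (A + r) * E := by
  have hmono : StrictMonoOn (fun x : ℝ => f * x * (B_D + γ * (x + S)) / (x + S) - (A + r) * x)
      (Set.Ici (0 : ℝ)) := by
    intro a ha b hb hab
    simp only [Set.mem_Ici] at ha hb
    have haS : 0 < a + S := by linarith
    have hbS : 0 < b + S := by linarith
    simp only
    have key : (f * b * (B_D + γ * (b + S)) / (b + S) - (A + r) * b)
        - (f * a * (B_D + γ * (a + S)) / (a + S) - (A + r) * a)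
        = (f * γ - (A + r)) * (b - a) + f * B_D * S * (b - a) / ((a + S) * (b + S)) := by
      field_simp
      ring
    have h1 : 0 ≤ (f * γ - (A + r)) * (b - a) := by nlinarith
    have hba : 0 < b - a := sub_pos.2 hab
    have h2 : 0 < f * B_D * S * (b - a) / ((a + S) * (b + S)) := by positivity
    linarith
  refine ⟨hmono, fun E hE x hx => ?_⟩
  obtain ⟨hx0, hxE⟩ := hx
  exact hmono.monotoneOn (Set.mem_Ici.2 hx0) (Set.mem_Ici.2 (le_of_lt hE)) hxE
end

section
/- Let f > 0, γ ≥ 0, B_D > 0, A > 0, r ≥ 0 satisfy f·γ < A + r, and let N ≥ 2 be a natural number. Define the per-investor liquidity amount x* = ((N − 1)/N²)·B_D·f/(A + r − f·γ) and S = (N − 1)·x*. Then for every x ≥ 0, g_S(x) ≤ g_S(x*), where g_S(x) = f·x·(B_D + γ·(x + S))/(x + S) − (A + r)·x. That is, the symmetric profile in which each of the N investors provides liquidity x* is a Nash equilibrium of the simultaneous liquidity provision game. -/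
/-
Writing `c = A + r - f·γ > 0`, the payoff is `g_S(x) = f·B_D·x/(x + S) - c·x`, a concave function
of `x`. Its stationarity condition is `c·(x + S)² = f·B_D·S`, and under it
`g_S(x) = g_S(x*) - c·(x - x*)²/(x + S)`. At the symmetric profile `x* + S = N·x*`, so the
condition reduces to `c·N²·x* = (N - 1)·f·B_D`, which is the defining equation of `x*`.
-/

noncomputable def shareProfit (K c S x : ℝ) : ℝ := K * x / (x + S) - c * x

theorem pro_rata_payoff_eq_shareProfit {f γ B_D A r S x : ℝ} (hxS : x + S ≠ 0) :
    f * x * (B_D + γ * (x + S)) / (x + S) - (A + r) * x =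
      shareProfit (B_D * f) (A + r - f * γ) S x := by
  unfold shareProfit
  field_simp
  ring

theorem shareProfit_eq_sub_sq {K c S x y : ℝ} (hx : x + S ≠ 0) (hy : y + S ≠ 0)
    (hfoc : c * (y + S) ^ 2 = K * S) :
    shareProfit K c S x = shareProfit K c S y - c * (x - y) ^ 2 / (x + S) := by
  unfold shareProfit
  field_simp
  linear_combination (y - x) * hfoc

theorem shareProfit_le_of_sq_eq {K c S x y : ℝ} (hc : 0 ≤ c) (hx : 0 < x + S) (hy : y + S ≠ 0)
    (hfoc : c * (y + S) ^ 2 = K * S) :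
    shareProfit K c S x ≤ shareProfit K c S y := by
  rw [shareProfit_eq_sub_sq hx.ne' hy hfoc]
  have : 0 ≤ c * (x - y) ^ 2 / (x + S) := by positivity
  linarith

theorem sq_eq_of_symmetric {K c n y : ℝ} (hy : n ^ 2 * (c * y) = (n - 1) * K) :
    c * (y + (n - 1) * y) ^ 2 = K * ((n - 1) * y) := by
  linear_combination y * hy

theorem symmetric_nash_equilibrium_general
    (f γ B_D A r : ℝ) (hf : 0 < f) (hB : 0 < B_D)
    (hlow : f * γ < A + r) (N : ℕ) (hN : 2 ≤ N) :
    ∀ x : ℝ, 0 ≤ x →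
      f * x *
          (B_D + γ * (x + ((N : ℝ) - 1) *
            (((N : ℝ) - 1) / (N : ℝ) ^ 2 * B_D * f / (A + r - f * γ)))) /
          (x + ((N : ℝ) - 1) * (((N : ℝ) - 1) / (N : ℝ) ^ 2 * B_D * f / (A + r - f * γ))) -
        (A + r) * x ≤
      f * (((N : ℝ) - 1) / (N : ℝ) ^ 2 * B_D * f / (A + r - f * γ)) *
          (B_D + γ * ((((N : ℝ) - 1) / (N : ℝ) ^ 2 * B_D * f / (A + r - f * γ)) +
            ((N : ℝ) - 1) * (((N : ℝ) - 1) / (N : ℝ) ^ 2 * B_D * f / (A + r - f * γ)))) /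
          ((((N : ℝ) - 1) / (N : ℝ) ^ 2 * B_D * f / (A + r - f * γ)) +
            ((N : ℝ) - 1) * (((N : ℝ) - 1) / (N : ℝ) ^ 2 * B_D * f / (A + r - f * γ))) -
        (A + r) * (((N : ℝ) - 1) / (N : ℝ) ^ 2 * B_D * f / (A + r - f * γ)) := by
  intro x hx
  set c := A + r - f * γ
  set xs := ((N : ℝ) - 1) / (N : ℝ) ^ 2 * B_D * f / c
  have hc : 0 < c := by linarith
  have hN1 : (0 : ℝ) < N - 1 := by
    have : (2 : ℝ) ≤ N := by exact_mod_cast hN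
    linarith
  have hxs : 0 < xs := by positivity
  have hxs_eq : (N : ℝ) ^ 2 * (c * xs) = (N - 1) * (B_D * f) := by
    simp only [xs]
    field_simp
  rw [pro_rata_payoff_eq_shareProfit (by positivity), pro_rata_payoff_eq_shareProfit (by positivity)]
  exact shareProfit_le_of_sq_eq hc.le (by positivity) (by positivity) (sq_eq_of_symmetric hxs_eq)

/-- The symmetric profile where each of the `N` investors provides
`x* = ((N − 1)/N²)·B_D·f/(A + r − f·γ)` is a Nash equilibrium: given the others' total
`S = (N − 1)·x*`, no deviation `x ≥ 0` yields a higher payoff than `x*`. -/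
theorem symmetric_nash_equilibrium
    (f γ B_D A r : ℝ) (hf : 0 < f) (hγ : 0 ≤ γ) (hB : 0 < B_D) (hA : 0 < A)
    (hr : 0 ≤ r) (hlow : f * γ < A + r) (N : ℕ) (hN : 2 ≤ N) :
    ∀ x : ℝ, 0 ≤ x →
      f * x *
          (B_D + γ * (x + ((N : ℝ) - 1) *
            (((N : ℝ) - 1) / (N : ℝ) ^ 2 * B_D * f / (A + r - f * γ)))) /
          (x + ((N : ℝ) - 1) * (((N : ℝ) - 1) / (N : ℝ) ^ 2 * B_D * f / (A + r - f * γ))) -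
        (A + r) * x ≤
      f * (((N : ℝ) - 1) / (N : ℝ) ^ 2 * B_D * f / (A + r - f * γ)) *
          (B_D + γ * ((((N : ℝ) - 1) / (N : ℝ) ^ 2 * B_D * f / (A + r - f * γ)) +
            ((N : ℝ) - 1) * (((N : ℝ) - 1) / (N : ℝ) ^ 2 * B_D * f / (A + r - f * γ)))) /
          ((((N : ℝ) - 1) / (N : ℝ) ^ 2 * B_D * f / (A + r - f * γ)) +
            ((N : ℝ) - 1) * (((N : ℝ) - 1) / (N : ℝ) ^ 2 * B_D * f / (A + r - f * γ))) -
        (A + r) * (((N : ℝ) - 1) / (N : ℝ) ^ 2 * B_D * f / (A + r - f * γ)) :=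
  symmetric_nash_equilibrium_general f γ B_D A r hf hB hlow N hN
end

section
/- Let f > 0, γ ≥ 0, B_D > 0, A > 0, r ≥ 0 satisfy f·γ < A + r, and let N ≥ 1 be a natural number. Define the liquidity provider performance P(V) = f·(B_D + γ·V) − (A + r)·V and the equilibrium aggregate liquidity V^eq(N) = ((N − 1)/N)·B_D·f/(A + r − f·γ). Then P(V^eq(N)) = f·B_D/N. In particular, total liquidity provider performance in equilibrium is positive and decays like 1/N. -/
/-- With `P(V) = f·(B_D + γ·V) − (A + r)·V` and
`V^eq(N) = ((N − 1)/N)·B_D·f/(A + r − f·γ)`, one has `P(V^eq(N)) = f·B_D/N`, which is positive. -/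
theorem equilibrium_performance
    (f γ B_D A r : ℝ) (hf : 0 < f) (hγ : 0 ≤ γ) (hB : 0 < B_D) (hA : 0 < A)
    (hr : 0 ≤ r) (hlow : f * γ < A + r) (N : ℕ) (hN : 1 ≤ N) :
    f * (B_D + γ * (((N : ℝ) - 1) / (N : ℝ) * B_D * f / (A + r - f * γ))) -
        (A + r) * (((N : ℝ) - 1) / (N : ℝ) * B_D * f / (A + r - f * γ)) =
      f * B_D / (N : ℝ) ∧
    0 < f * B_D / (N : ℝ) := by
  have hN0 : (0:ℝ) < N := by exact_mod_cast Nat.lt_of_lt_of_le Nat.zero_lt_one hN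
  have hd : A + r - f * γ ≠ 0 := by linarith
  constructor
  · field_simp
    ring
  · positivity
end

section
/- Let f > 0, γ ≥ 0, B_D > 0, A > 0, r ≥ 0 satisfy f·γ < A + r, let ε ≥ 0 be the amount of liquidity a cooperative (monopolist) provides, and let N ≥ 1 be a natural number. Define P(V) = f·(B_D + γ·V) − (A + r)·V and V^eq(N) = ((N − 1)/N)·B_D·f/(A + r − f·γ). Then the price of anarchy satisfies the exact identity P(ε)/P(V^eq(N)) = N·(f·B_D − ε·(A + r − f·γ))/(f·B_D). -/
/-- Exact price-of-anarchy identity: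
`P(ε)/P(V^eq(N)) = N·(f·B_D − ε·(A + r − f·γ))/(f·B_D)`. -/
theorem price_of_anarchy_identity
    (f γ B_D A r ε : ℝ) (hf : 0 < f) (hγ : 0 ≤ γ) (hB : 0 < B_D) (hA : 0 < A)
    (hr : 0 ≤ r) (hε : 0 ≤ ε) (hlow : f * γ < A + r) (N : ℕ) (hN : 1 ≤ N) :
    (f * (B_D + γ * ε) - (A + r) * ε) /
        (f * (B_D + γ * (((N : ℝ) - 1) / (N : ℝ) * B_D * f / (A + r - f * γ))) -
          (A + r) * (((N : ℝ) - 1) / (N : ℝ) * B_D * f / (A + r - f * γ))) =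
      (N : ℝ) * (f * B_D - ε * (A + r - f * γ)) / (f * B_D) := by
  have hd : A + r - f * γ ≠ 0 := by linarith
  have hNr : (N : ℝ) ≠ 0 := by positivity
  have hfB : f * B_D ≠ 0 := by positivity
  have key : f * (B_D + γ * (((N : ℝ) - 1) / (N : ℝ) * B_D * f / (A + r - f * γ))) -
      (A + r) * (((N : ℝ) - 1) / (N : ℝ) * B_D * f / (A + r - f * γ)) = f * B_D / N := by
    field_simp
    ring
  rw [key]
  have hnum : f * (B_D + γ * ε) - (A + r) * ε = f * B_D - ε * (A + r - f * γ) := by ring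
  rw [hnum, div_div_eq_mul_div]
  ring
end

section
/- Let f > 0, γ ≥ 0, B_D > 0, A > 0, r ≥ 0 satisfy f·γ < A + r ≤ f·(B_D + γ), and let 0 < ε ≤ 1 be the cooperative's liquidity amount. Define P(V) = f·(B_D + γ·V) − (A + r)·V and V^eq(N) = ((N − 1)/N)·B_D·f/(A + r − f·γ). Then there exists a constant c ≥ 0, independent of N (namely c = (f·B_D − ε·(A + r − f·γ))/(f·B_D)), such that for every natural number N ≥ 2, 0 ≤ P(ε)/P(V^eq(N)) ≤ c·N. Hence the price of anarchy of liquidity provider performance is O(N). -/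
/-- Price of anarchy is `O(N)`: with
`c = (f·B_D − ε·(A + r − f·γ))/(f·B_D) ≥ 0`, for every `N ≥ 2`,
`0 ≤ P(ε)/P(V^eq(N)) ≤ c·N`. -/
theorem price_of_anarchy_O_N
    (f γ B_D A r ε : ℝ) (hf : 0 < f) (hγ : 0 ≤ γ) (hB : 0 < B_D) (hA : 0 < A)
    (hr : 0 ≤ r) (hε0 : 0 < ε) (hε1 : ε ≤ 1)
    (hlow : f * γ < A + r) (hhigh : A + r ≤ f * (B_D + γ)) :
    0 ≤ (f * B_D - ε * (A + r - f * γ)) / (f * B_D) ∧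
    ∀ N : ℕ, 2 ≤ N →
      0 ≤ (f * (B_D + γ * ε) - (A + r) * ε) /
            (f * (B_D + γ * (((N : ℝ) - 1) / (N : ℝ) * B_D * f / (A + r - f * γ))) -
              (A + r) * (((N : ℝ) - 1) / (N : ℝ) * B_D * f / (A + r - f * γ))) ∧
      (f * (B_D + γ * ε) - (A + r) * ε) /
            (f * (B_D + γ * (((N : ℝ) - 1) / (N : ℝ) * B_D * f / (A + r - f * γ))) -
              (A + r) * (((N : ℝ) - 1) / (N : ℝ) * B_D * f / (A + r - f * γ))) ≤
        (f * B_D - ε * (A + r - f * γ)) / (f * B_D) * (N : ℝ) := by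
  have hk : 0 < A + r - f * γ := by linarith
  have hkne : A + r - f * γ ≠ 0 := ne_of_gt hk
  have hnum : 0 ≤ f * B_D - ε * (A + r - f * γ) := by nlinarith
  have hfB : 0 < f * B_D := mul_pos hf hB
  refine ⟨div_nonneg hnum hfB.le, fun N hN => ?_⟩
  have hNpos : (0:ℝ) < (N:ℝ) := by exact_mod_cast Nat.pos_of_ne_zero (by omega)
  have hNne : (N:ℝ) ≠ 0 := ne_of_gt hNpos
  have hden :
      f * (B_D + γ * (((N : ℝ) - 1) / (N : ℝ) * B_D * f / (A + r - f * γ))) -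
        (A + r) * (((N : ℝ) - 1) / (N : ℝ) * B_D * f / (A + r - f * γ)) = f * B_D / (N:ℝ) := by
    field_simp
    ring
  have hnum' : f * (B_D + γ * ε) - (A + r) * ε = f * B_D - ε * (A + r - f * γ) := by ring
  rw [hden, hnum']
  have hdpos : 0 < f * B_D / (N:ℝ) := by positivity
  refine ⟨div_nonneg hnum hdpos.le, le_of_eq ?_⟩
  field_simp
end

section
/- Let f > 0, γ ≥ 0, B_D > 0, r ≥ 0 be fixed, let N ≥ 2 be a natural number, and let A > 0 satisfy f·γ < A + r. Consider the total equilibrium Loss-Versus-Rebalancing as a function of the adverse selection intensity: L(a) = a·V^eq(a) with V^eq(a) = ((N − 1)/N)·B_D·f/(a + r − f·γ). Then L is differentiable at A with derivative L′(A) = V^eq(A)·(1 − A/(A + r − f·γ)); moreover, if r > f·γ then L′(A) > 0. -/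
/-!
Writing `C = ((N - 1)/N)·B_D·f` and `d = r - f·γ`, the total LVR is `a ↦ a·C/(a + d)`, whose
derivative `C/(a + d) - a·C/(a + d)² = C·d/(a + d)²` has the sign of `d`.
-/

theorem hasDerivAt_mul_div_add_const {𝕜 : Type*} [NontriviallyNormedField 𝕜] (C d x : 𝕜)
    (hx : x + d ≠ 0) :
    HasDerivAt (fun a => a * (C / (a + d))) (C / (x + d) * (1 - x / (x + d))) x := by
  have hden : HasDerivAt (fun a => a + d) 1 x := (hasDerivAt_id x).add_const d
  refine ((hasDerivAt_id' x).fun_mul ((hasDerivAt_const x C).fun_div hden hx)).congr_deriv ?_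
  field_simp
  ring

theorem div_mul_one_sub_div_pos {C d x : ℝ} (hC : 0 < C) (hd : 0 < d) (hxd : 0 < x + d) :
    0 < C / (x + d) * (1 - x / (x + d)) := by
  have hcompl : 1 - x / (x + d) = d / (x + d) := by
    rw [one_sub_div hxd.ne', add_sub_cancel_left]
  rw [hcompl]
  positivity

theorem sub_one_div_natCast_pos {N : ℕ} (hN : 1 < N) : 0 < ((N : ℝ) - 1) / N := by
  have hN' : (1 : ℝ) < N := by exact_mod_cast hN
  exact div_pos (sub_pos.2 hN') (by linarith)

theorem excess_LVR_derivative_general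
    (f γ B_D r : ℝ) (hf : 0 < f) (hB : 0 < B_D)
    (N : ℕ) (hN : 2 ≤ N) (A : ℝ) (hlow : f * γ < A + r) :
    HasDerivAt
      (fun a : ℝ => a * (((N : ℝ) - 1) / (N : ℝ) * B_D * f / (a + r - f * γ)))
      ((((N : ℝ) - 1) / (N : ℝ) * B_D * f / (A + r - f * γ)) *
        (1 - A / (A + r - f * γ))) A ∧
    (f * γ < r →
      0 < (((N : ℝ) - 1) / (N : ℝ) * B_D * f / (A + r - f * γ)) *
        (1 - A / (A + r - f * γ))) := by
  have hden : 0 < A + (r - f * γ) := by linarith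
  have hC : 0 < ((N : ℝ) - 1) / N * B_D * f := by
    have := sub_one_div_natCast_pos hN
    positivity
  refine ⟨?_, fun hfγr => ?_⟩
  · simpa only [add_sub_assoc] using hasDerivAt_mul_div_add_const _ _ A hden.ne'
  · simpa only [add_sub_assoc] using div_mul_one_sub_div_pos hC (sub_pos.2 hfγr) hden

/-- The total equilibrium LVR `L(a) = a·((N − 1)/N)·B_D·f/(a + r − f·γ)` is
differentiable at `A` with derivative `V^eq(A)·(1 − A/(A + r − f·γ))`, which is positive
whenever `r > f·γ`. -/
theorem excess_LVR_derivative
    (f γ B_D r : ℝ) (hf : 0 < f) (hγ : 0 ≤ γ) (hB : 0 < B_D) (hr : 0 ≤ r)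
    (N : ℕ) (hN : 2 ≤ N) (A : ℝ) (hA : 0 < A) (hlow : f * γ < A + r) :
    HasDerivAt
      (fun a : ℝ => a * (((N : ℝ) - 1) / (N : ℝ) * B_D * f / (a + r - f * γ)))
      ((((N : ℝ) - 1) / (N : ℝ) * B_D * f / (A + r - f * γ)) *
        (1 - A / (A + r - f * γ))) A ∧
    (f * γ < r →
      0 < (((N : ℝ) - 1) / (N : ℝ) * B_D * f / (A + r - f * γ)) *
        (1 - A / (A + r - f * γ))) :=
  excess_LVR_derivative_general f γ B_D r hf hB N hN A hlow
end

section
/- Let f > 0, γ > 0, A > 0, r ≥ 0 satisfy f·γ < A + r, and let N ≥ 2 be a natural number. Consider equilibrium aggregate trading demand as a function of base demand: D*(B) = B + γ·((N − 1)/N)·B·f/(A + r − f·γ). Then D* is differentiable with derivative D*′(B) = 1 + ((N − 1)/N)·f·γ/(A + r − f·γ) at every B, and this derivative is strictly greater than 1. That is, a unit increase in base demand increases equilibrium aggregate demand by strictly more than one unit. -/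
/-- Equilibrium aggregate demand as a function of base demand,
`D*(B) = B + γ·((N − 1)/N)·B·f/(A + r − f·γ)`, has derivative
`1 + ((N − 1)/N)·f·γ/(A + r − f·γ)` at every `B`, and this derivative is strictly
greater than `1`. -/
theorem demand_multiplier
    (f γ A r : ℝ) (hf : 0 < f) (hγ : 0 < γ) (hA : 0 < A) (hr : 0 ≤ r)
    (hlow : f * γ < A + r) (N : ℕ) (hN : 2 ≤ N) :
    (∀ B : ℝ, HasDerivAt
        (fun B : ℝ => B + γ * (((N : ℝ) - 1) / (N : ℝ) * B * f / (A + r - f * γ)))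
        (1 + ((N : ℝ) - 1) / (N : ℝ) * (f * γ) / (A + r - f * γ)) B) ∧
    1 < 1 + ((N : ℝ) - 1) / (N : ℝ) * (f * γ) / (A + r - f * γ) := by
  have hd : 0 < A + r - f * γ := by linarith
  have hN1 : (1:ℝ) ≤ (N:ℝ) := by exact_mod_cast Nat.one_le_of_lt hN
  have hNpos : (0:ℝ) < (N:ℝ) := by linarith
  have hpos : 0 < ((N : ℝ) - 1) / (N : ℝ) * (f * γ) / (A + r - f * γ) := by
    have h1 : (0:ℝ) < (N:ℝ) - 1 := by
      have : (2:ℝ) ≤ (N:ℝ) := by exact_mod_cast hN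
      linarith
    positivity
  refine ⟨fun B => ?_, by linarith⟩
  have h : HasDerivAt
      (fun B : ℝ => B + γ * (((N : ℝ) - 1) / (N : ℝ) * B * f / (A + r - f * γ)))
      (1 + γ * (((N : ℝ) - 1) / (N : ℝ) * 1 * f / (A + r - f * γ))) B := by
    exact (hasDerivAt_id B).add (((((hasDerivAt_id B).const_mul
      (((N : ℝ) - 1) / (N : ℝ))).mul_const f).div_const (A + r - f * γ)).const_mul γ)
  convert h using 1
  ring
end
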